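/- (Consistent completions are provable) For every consistent PNP P: ⊢ P̂ ⇒ ⋁_{Q ∈ comps(P)} Q̂, i.e., the literal interpretation of P provably implies the disjunction of the literal interpretations of its consistent completions. -/

import Mathlib

/-- Syntax of LTLf: variables, falsum, implication, (strong) next, weak until. -/
inductive LTLf (Var : Type) : Type
  | var : Var → LTLf Var
  | bot : LTLf Var
  | imp : LTLf Var → LTLf Var → LTLf Var
  | next : LTLf Var → LTLf Var
  | wuntil : LTLf Var → LTLf Var → LTLf Var
  deriving DecidableEq

namespace LTLf

variable {Var : Type}

/-- ¬φ := φ ⇒ ⊥ -/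
def neg (φ : LTLf Var) : LTLf Var := imp φ bot
/-- ⊤ := ¬⊥ -/
def top : LTLf Var := neg bot
/-- φ ∨ ψ := ¬φ ⇒ ψ -/
def disj (φ ψ : LTLf Var) : LTLf Var := imp (neg φ) ψ
/-- φ ∧ ψ := ¬(¬φ ∨ ¬ψ) -/
def conj (φ ψ : LTLf Var) : LTLf Var := neg (disj (neg φ) (neg ψ))
/-- φ ⟺ ψ := (φ ⇒ ψ) ∧ (ψ ⇒ φ) -/
def liff (φ ψ : LTLf Var) : LTLf Var := conj (imp φ ψ) (imp ψ φ)
/-- end := ¬X⊤ -/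
def endF : LTLf Var := neg (next top)
/-- weak next: •φ := ¬X¬φ -/
def wnext (φ : LTLf Var) : LTLf Var := neg (next (neg φ))
/-- □φ := φ W ⊥ -/
def always (φ : LTLf Var) : LTLf Var := wuntil φ bot
/-- ◇φ := ¬□¬φ -/
def ev (φ : LTLf Var) : LTLf Var := neg (always (neg φ))

/-- A propositional valuation: an assignment of booleans to formulae (treating
variables, next- and weak-until-formulae as opaque atoms) that respects ⊥ and ⇒. -/
def IsPropValuation (f : LTLf Var → Bool) : Prop :=
  f bot = false ∧ ∀ φ ψ : LTLf Var, f (imp φ ψ) = (!(f φ) || f ψ)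

/-- A propositional tautology: true under every propositional valuation. -/
def Tautology (φ : LTLf Var) : Prop :=
  ∀ f : LTLf Var → Bool, IsPropValuation f → f φ = true

/-- The LTLf proof system, with hypotheses drawn from a set `F`:
`F ⊢ φ` means `⊢ φ` is derivable assuming `⊢ ψ` for each `ψ ∈ F`. -/
inductive PrvFrom : Set (LTLf Var) → LTLf Var → Prop
  /-- assumption -/
  | hyp {F φ} : φ ∈ F → PrvFrom F φ
  /-- (Taut) all propositional tautologies -/
  | taut {F φ} : Tautology φ → PrvFrom F φ
  /-- modus ponens (propositional reasoning) -/
  | mp {F φ ψ} : PrvFrom F (imp φ ψ) → PrvFrom F φ → PrvFrom F ψ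
  /-- (WkNextDistr) ⊢ •(φ⇒ψ) ⟺ (•φ ⇒ •ψ) -/
  | wkNextDistr (F) (φ ψ) :
      PrvFrom F (liff (wnext (imp φ ψ)) (imp (wnext φ) (wnext ψ)))
  /-- (EndNextContra) ⊢ end ⇒ ¬Xφ -/
  | endNextContra (F) (φ) : PrvFrom F (imp endF (neg (next φ)))
  /-- (Finite) ⊢ ◇end -/
  | fin (F) : PrvFrom F (ev endF)
  /-- (WkUntilUnroll) ⊢ φ W ψ ⟺ ψ ∨ (φ ∧ •(φ W ψ)) -/
  | wkUntilUnroll (F) (φ ψ) :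
      PrvFrom F (liff (wuntil φ ψ) (disj ψ (conj φ (wnext (wuntil φ ψ)))))
  /-- (WkNextStep) from ⊢ φ infer ⊢ •φ -/
  | wkNextStep {F φ} : PrvFrom F φ → PrvFrom F (wnext φ)
  /-- (Induction) from ⊢ φ⇒ψ and ⊢ φ⇒•φ infer ⊢ φ⇒□ψ -/
  | ind {F φ ψ} :
      PrvFrom F (imp φ ψ) → PrvFrom F (imp φ (wnext φ)) → PrvFrom F (imp φ (always ψ))

/-- `⊢ φ`: provability with no hypotheses. -/
def Prv (φ : LTLf Var) : Prop := PrvFrom ∅ φ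

/-! ## Semantics: finite nonempty traces.
A trace of length `n ≥ 1` is given by valuations `η i : Var → Bool` for `1 ≤ i ≤ n`. -/

/-- `Holds η n φ i` says that `K^n_i(φ) = t` in the trace `(η 1, …, η n)`. -/
def Holds (η : ℕ → Var → Bool) (n : ℕ) : LTLf Var → ℕ → Prop
  | var v, i => η i v = true
  | bot, _ => False
  | imp φ ψ, i => Holds η n φ i → Holds η n ψ i
  | next φ, i => i < n ∧ Holds η n φ (i + 1)
  | wuntil φ ψ, i =>
      (∀ j, i ≤ j → j ≤ n → Holds η n φ j) ∨
      (∃ k, i ≤ k ∧ k ≤ n ∧ Holds η n ψ k ∧ ∀ j, i ≤ j → j < k → Holds η n φ j)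

/-- `K^n ⊨ φ`: φ holds at every time step `1 ≤ i ≤ n`. -/
def Models (η : ℕ → Var → Bool) (n : ℕ) (φ : LTLf Var) : Prop :=
  ∀ i, 1 ≤ i → i ≤ n → Holds η n φ i

/-- `⊨ φ`: φ is valid, i.e., satisfied by every finite nonempty trace. -/
def Valid (φ : LTLf Var) : Prop :=
  ∀ (n : ℕ), 1 ≤ n → ∀ η : ℕ → Var → Bool, Models η n φ

/-- `F ⊨ φ`: φ is valid under the assumptions `F`. -/
def ValidUnder (F : Set (LTLf Var)) (φ : LTLf Var) : Prop :=
  ∀ (n : ℕ), 1 ≤ n → ∀ η : ℕ → Var → Bool,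
    (∀ ψ ∈ F, Models η n ψ) → Models η n φ

/-! ## Positive-negative pairs (PNPs) -/

/-- A positive-negative pair: two finite sets of formulae. -/
structure PNP (Var : Type) where
  pos : Finset (LTLf Var)
  neg : Finset (LTLf Var)

/-- Conjunction of a list of formulae. -/
def conjList : List (LTLf Var) → LTLf Var
  | [] => top
  | φ :: rest => conj φ (conjList rest)

/-- Disjunction of a list of formulae. -/
def disjList : List (LTLf Var) → LTLf Var
  | [] => bot
  | φ :: rest => disj φ (disjList rest)

variable [DecidableEq Var]

/-- Literal interpretation `P̂`: conjunction of all of `pos P` and of the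
negations of all of `neg P`. -/
noncomputable def PNP.interp (P : PNP Var) : LTLf Var :=
  conjList (P.pos.toList ++ P.neg.toList.map LTLf.neg)

/-- `P` is consistent iff it is not the case that `⊢ ¬P̂`. -/
def PNP.Consistent (P : PNP Var) : Prop := ¬ Prv (LTLf.neg P.interp)

/-- `F_P := pos(P) ∪ neg(P)`. -/
def PNP.forms (P : PNP Var) : Finset (LTLf Var) := P.pos ∪ P.neg

/-- Helper for σ: `{φ | Xφ ∈ S}` pointwise. -/
def nextArgs : LTLf Var → Finset (LTLf Var)
  | next φ => {φ}
  | _ => ∅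

/-- Helper for σ⁺₂: keep `φ W ψ` when `ψ` is in the given (negative) set. -/
def wPosStep (N : Finset (LTLf Var)) : LTLf Var → Finset (LTLf Var)
  | wuntil φ ψ => if ψ ∈ N then {wuntil φ ψ} else ∅
  | _ => ∅

/-- Helper for σ⁻₄: keep `φ W ψ` when `φ` is in the given (positive) set. -/
def wNegStep (Pos : Finset (LTLf Var)) : LTLf Var → Finset (LTLf Var)
  | wuntil φ ψ => if φ ∈ Pos then {wuntil φ ψ} else ∅
  | _ => ∅

/-- The step function σ. -/
def PNP.step (P : PNP Var) : PNP Var :=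
  ⟨P.pos.biUnion nextArgs ∪ P.pos.biUnion (wPosStep P.neg),
   P.neg.biUnion nextArgs ∪ P.neg.biUnion (wNegStep P.pos)⟩

/-- The closure function τ on formulae. -/
def tau : LTLf Var → Finset (LTLf Var)
  | var v => {var v}
  | bot => {bot}
  | imp φ ψ => insert (imp φ ψ) (tau φ ∪ tau ψ)
  | next φ => {next φ}
  | wuntil φ ψ => insert (wuntil φ ψ) (tau φ ∪ tau ψ)

/-- τ on finite sets of formulae. -/
def tauSet (F : Finset (LTLf Var)) : Finset (LTLf Var) := F.biUnion tau

/-- τ(P) := τ(F_P). -/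
def PNP.tauP (P : PNP Var) : Finset (LTLf Var) := tauSet P.forms

/-- `P ≼ Q`. -/
def PNP.Extends (P Q : PNP Var) : Prop := P.pos ⊆ Q.pos ∧ P.neg ⊆ Q.neg

/-- `assigns(F)`: PNPs whose formulae are exactly `τ(F)`. -/
def Assigns (F : Finset (LTLf Var)) : Set (PNP Var) :=
  {P | P.forms = tauSet F}

/-- `comps(P)`: consistent completions of `P`. -/
def Comps (P : PNP Var) : Set (PNP Var) :=
  {Q | Q.forms = P.tauP ∧ P.Extends Q ∧ Q.Consistent}

/-- `assigns(F)` as a finite set. -/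
noncomputable def assignsF (F : Finset (LTLf Var)) : Finset (PNP Var) := by
  classical
  exact (((tauSet F).powerset ×ˢ (tauSet F).powerset).filter
      (fun p => p.1 ∪ p.2 = tauSet F)).image (fun p => ⟨p.1, p.2⟩)

/-- `comps(P)` as a finite set. -/
noncomputable def compsF (P : PNP Var) : Finset (PNP Var) := by
  classical
  exact (assignsF P.forms).filter (fun Q => P.Extends Q ∧ Q.Consistent)

/-! The argument is purely propositional. A propositional valuation making `P̂` true splits
`τ(P)` into the formulas it makes true and false, giving an extension `Q` of `P` over `τ(P)`
with `Q̂` true. Taking the finitely many provable formulas `¬R̂`, for `R` inconsistent, as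
premises, a valuation satisfying them cannot make `Q̂` true unless `Q` is consistent, i.e.
`Q ∈ comps(P)`. -/

section Propositional

omit [DecidableEq Var]

variable {f : LTLf Var → Bool}

theorem IsPropValuation.neg (hf : IsPropValuation f) (φ : LTLf Var) :
    f (LTLf.neg φ) = !f φ := by
  simp [LTLf.neg, hf.2, hf.1]

theorem IsPropValuation.top (hf : IsPropValuation f) : f (top : LTLf Var) = true := by
  simp [LTLf.top, hf.neg, hf.1]

theorem IsPropValuation.disj (hf : IsPropValuation f) (φ ψ : LTLf Var) :
    f (disj φ ψ) = (f φ || f ψ) := by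
  simp [LTLf.disj, hf.2, hf.neg]

theorem IsPropValuation.conj (hf : IsPropValuation f) (φ ψ : LTLf Var) :
    f (conj φ ψ) = (f φ && f ψ) := by
  simp [LTLf.conj, hf.neg, hf.disj]

theorem IsPropValuation.conjList (hf : IsPropValuation f) (l : List (LTLf Var)) :
    f (conjList l) = l.all f := by
  induction l with
  | nil => simp [LTLf.conjList, hf.top]
  | cons φ l ih => simp [LTLf.conjList, hf.conj, ih]

theorem IsPropValuation.disjList (hf : IsPropValuation f) (l : List (LTLf Var)) :
    f (disjList l) = l.any f := by
  induction l with
  | nil => simp [LTLf.disjList, hf.1]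
  | cons φ l ih => simp [LTLf.disjList, hf.disj, ih]

theorem PrvFrom.of_propositional_consequence {F : Set (LTLf Var)} {hs : List (LTLf Var)}
    {φ : LTLf Var} (hprv : ∀ ψ ∈ hs, PrvFrom F ψ)
    (hcons : ∀ f, IsPropValuation f → (∀ ψ ∈ hs, f ψ = true) → f φ = true) :
    PrvFrom F φ := by
  induction hs generalizing φ with
  | nil => exact PrvFrom.taut fun f hf => hcons f hf (by simp)
  | cons ψ hs ih =>
    refine PrvFrom.mp (ih (φ := imp ψ φ) (fun χ hχ => hprv χ (List.mem_cons_of_mem _ hχ)) ?_)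
      (hprv ψ List.mem_cons_self)
    intro f hf hhs
    rw [hf.2]
    cases hψ : f ψ
    · rfl
    · simpa using hcons f hf (by simp [hψ]; exact hhs)

theorem IsPropValuation.interp_eq_true_iff {f : LTLf Var → Bool} (hf : IsPropValuation f)
    (Q : PNP Var) :
    f Q.interp = true ↔ (∀ φ ∈ Q.pos, f φ = true) ∧ ∀ ψ ∈ Q.neg, f ψ = false := by
  simp [PNP.interp, hf.conjList, hf.neg]

def PNP.ofValuation (f : LTLf Var → Bool) (F : Finset (LTLf Var)) : PNP Var :=
  ⟨F.filter (f · = true), F.filter (f · = false)⟩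

theorem IsPropValuation.interp_ofValuation {f : LTLf Var → Bool} (hf : IsPropValuation f)
    (F : Finset (LTLf Var)) : f (PNP.ofValuation f F).interp = true :=
  (hf.interp_eq_true_iff _).2
    ⟨fun _ hφ => (Finset.mem_filter.1 hφ).2, fun _ hψ => (Finset.mem_filter.1 hψ).2⟩

end Propositional

theorem PNP.forms_ofValuation (f : LTLf Var → Bool) (F : Finset (LTLf Var)) :
    (PNP.ofValuation f F).forms = F := by
  ext φ
  cases hφ : f φ <;> simp [PNP.ofValuation, PNP.forms, hφ]

theorem PNP.extends_ofValuation {f : LTLf Var → Bool} (hf : IsPropValuation f) {P : PNP Var}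
    (hP : f P.interp = true) {F : Finset (LTLf Var)} (hF : P.forms ⊆ F) :
    P.Extends (PNP.ofValuation f F) := by
  obtain ⟨hpos, hneg⟩ := (hf.interp_eq_true_iff P).1 hP
  exact ⟨fun φ hφ => Finset.mem_filter.2 ⟨hF (Finset.mem_union_left _ hφ), hpos φ hφ⟩,
    fun ψ hψ => Finset.mem_filter.2 ⟨hF (Finset.mem_union_right _ hψ), hneg ψ hψ⟩⟩

theorem self_mem_tau (φ : LTLf Var) : φ ∈ tau φ := by
  cases φ <;> simp [tau]

theorem subset_tauSet (F : Finset (LTLf Var)) : F ⊆ tauSet F :=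
  fun φ hφ => Finset.mem_biUnion.2 ⟨φ, hφ, self_mem_tau φ⟩

theorem mem_assignsF {F : Finset (LTLf Var)} {Q : PNP Var} :
    Q ∈ assignsF F ↔ Q.forms = tauSet F := by
  refine ⟨?_, fun h => ?_⟩
  · simp only [assignsF, Finset.mem_image, Finset.mem_filter]
    rintro ⟨_, ⟨_, h⟩, rfl⟩
    exact h
  · simp only [assignsF, Finset.mem_image, Finset.mem_filter, Finset.mem_product,
      Finset.mem_powerset]
    exact ⟨(Q.pos, Q.neg), ⟨⟨h ▸ Finset.subset_union_left, h ▸ Finset.subset_union_right⟩, h⟩,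
      rfl⟩

theorem mem_compsF {P Q : PNP Var} : Q ∈ compsF P ↔ Q ∈ Comps P := by
  simp only [compsF, Finset.mem_filter, mem_assignsF, Comps, PNP.tauP]
  rfl

theorem ltlf_completions_provable_general {Var : Type} [DecidableEq Var] (P : PNP Var) :
    Prv (imp P.interp (disjList ((compsF P).toList.map PNP.interp))) := by
  classical
  let inconsistent := (assignsF P.forms).filter fun Q => ¬ Q.Consistent
  refine PrvFrom.of_propositional_consequence
    (hs := inconsistent.toList.map fun Q => LTLf.neg Q.interp) ?_ ?_
  · simp only [List.mem_map, Finset.mem_toList, Finset.mem_filter, inconsistent]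
    rintro _ ⟨Q, ⟨-, hQ⟩, rfl⟩
    exact not_not.1 hQ
  · intro f hf hinc
    rw [hf.2, hf.disjList]
    cases hP : f P.interp
    · rfl
    let Q := PNP.ofValuation f P.tauP
    have hQ : f Q.interp = true := hf.interp_ofValuation _
    have hcons : Q.Consistent := fun h => by
      have hneg : f (LTLf.neg Q.interp) = true :=
        hinc _ (List.mem_map_of_mem (Finset.mem_toList.2 (Finset.mem_filter.2
          ⟨mem_assignsF.2 (PNP.forms_ofValuation _ _), not_not.2 h⟩)))
      simp [hf.neg, hQ] at hneg
    have hmem : Q ∈ compsF P := mem_compsF.2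
      ⟨PNP.forms_ofValuation _ _, PNP.extends_ofValuation hf hP (subset_tauSet _), hcons⟩
    simpa using ⟨Q, hmem, hQ⟩

/-- Consistent completions are provable: for every consistent PNP `P`,
⊢ P̂ ⇒ ⋁_{Q ∈ comps(P)} Q̂. -/
theorem ltlf_completions_provable {Var : Type} [DecidableEq Var] (P : PNP Var)
    (hP : P.Consistent) :
    Prv (imp P.interp (disjList ((compsF P).toList.map PNP.interp))) :=
  ltlf_completions_provable_general P

end LTLf
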